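/- arXiv:2310.04308 — 6 statements merged into one kernel-verified Lean document; each statement's English description precedes it below -/
import Mathlib

section
/- Suppose A : [0,T] → ℝ satisfies C₁|t−s|^{γ₁} ≤ A_t − A_s ≤ C₂|t−s|^{γ₂} for all 0 ≤ s ≤ t ≤ T, with 1 ≥ γ₁ ≥ γ₂ > 0 and C₁, C₂ > 0. Then for all 0 ≤ s < t ≤ T, (t−s) m_{s,t} ≥ (C₁²/(2^{2γ₁+1}(2γ₁+1))) (t−s)^{2γ₁+1}, where m_{s,t} := (1/(t−s)) ∫_s^t (A_r − Ā_{s,t})² dr with Ā_{s,t} the average of A on [s,t]. -/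
open MeasureTheory intervalIntegral Real

lemma aux_int (c a b : ℝ) (hc : 0 < c) :
    ∫ r in a..b, (r - a) ^ c = (b - a) ^ (c + 1) / (c + 1) := by
  rw [intervalIntegral.integral_comp_sub_right (fun x => x ^ c) a, sub_self,
    integral_rpow (Or.inl (by linarith)), Real.zero_rpow (by positivity), sub_zero]

lemma aux_int' (c a b : ℝ) (hc : 0 < c) :
    ∫ r in a..b, (b - r) ^ c = (b - a) ^ (c + 1) / (c + 1) := by
  rw [intervalIntegral.integral_comp_sub_left (fun x => x ^ c) b, sub_self,
    integral_rpow (Or.inl (by linarith)), Real.zero_rpow (by positivity), sub_zero]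

/-- Lower bound `(t−s) m_{s,t} ≥ (C₁²/(2^{2γ₁+1}(2γ₁+1))) (t−s)^{2γ₁+1}` for a
two-sided Hölder increasing `A`. -/
theorem stmt4 (T C₁ C₂ γ₁ γ₂ : ℝ) (A : ℝ → ℝ)
    (hγ₁ : γ₁ ≤ 1) (hγ : γ₂ ≤ γ₁) (hγ₂ : 0 < γ₂) (hC₁ : 0 < C₁) (hC₂ : 0 < C₂)
    (hA : ContinuousOn A (Set.Icc 0 T))
    (hbound : ∀ s t : ℝ, 0 ≤ s → s ≤ t → t ≤ T →
      C₁ * |t - s| ^ γ₁ ≤ A t - A s ∧ A t - A s ≤ C₂ * |t - s| ^ γ₂)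
    (s t : ℝ) (hs : 0 ≤ s) (hst : s < t) (htT : t ≤ T) :
    (C₁ ^ 2 / (2 ^ (2 * γ₁ + 1) * (2 * γ₁ + 1))) * (t - s) ^ (2 * γ₁ + 1)
      ≤ (t - s) * ((t - s)⁻¹ * ∫ r in s..t, (A r - (t - s)⁻¹ * ∫ u in s..t, A u) ^ 2) := by
  have hδ : 0 < t - s := sub_pos.2 hst
  have hγ₁0 : 0 < γ₁ := lt_of_lt_of_le hγ₂ hγ
  have h2γ : 0 < 2 * γ₁ := by linarith
  have he : 0 < 2 * γ₁ + 1 := by linarith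
  have hA' : ContinuousOn A (Set.Icc s t) := hA.mono (Set.Icc_subset_Icc hs htT)
  have hAint : IntervalIntegrable A volume s t := by
    apply ContinuousOn.intervalIntegrable; rwa [Set.uIcc_of_le hst.le]
  set Abar := (t - s)⁻¹ * ∫ u in s..t, A u with hAbardef
  have hmono : ∀ a b, 0 ≤ a → a ≤ b → b ≤ T → A a ≤ A b := by
    intro a b h1 h2 h3
    have hb := (hbound a b h1 h2 h3).1
    have h4 : 0 ≤ C₁ * |b - a| ^ γ₁ := by positivity
    linarith
  have hAbar_lb : A s ≤ Abar := by
    have h1 : (∫ u in s..t, A s) ≤ ∫ u in s..t, A u :=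
      intervalIntegral.integral_mono_on hst.le intervalIntegrable_const hAint
        (fun x hx => hmono s x hs hx.1 (hx.2.trans htT))
    rw [intervalIntegral.integral_const, smul_eq_mul] at h1
    rw [hAbardef, inv_mul_eq_div, le_div_iff₀ hδ]
    linarith
  have hAbar_ub : Abar ≤ A t := by
    have h1 : (∫ u in s..t, A u) ≤ ∫ u in s..t, A t :=
      intervalIntegral.integral_mono_on hst.le hAint intervalIntegrable_const
        (fun x hx => hmono x t (hs.trans hx.1) hx.2 htT)
    rw [intervalIntegral.integral_const, smul_eq_mul] at h1
    rw [hAbardef, inv_mul_eq_div, div_le_iff₀ hδ]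
    linarith
  obtain ⟨t₀, ht₀, hAt₀⟩ := intermediate_value_Icc hst.le hA' ⟨hAbar_lb, hAbar_ub⟩
  have hrw : (t - s) * ((t - s)⁻¹ * ∫ r in s..t, (A r - Abar) ^ 2)
      = ∫ r in s..t, (A r - Abar) ^ 2 := by
    field_simp
  rw [hrw]
  have hfc : ContinuousOn (fun r => (A r - Abar) ^ 2) (Set.Icc s t) :=
    (hA'.sub continuousOn_const).pow 2
  have hfint : ∀ a b, a ∈ Set.Icc s t → b ∈ Set.Icc s t → a ≤ b →
      IntervalIntegrable (fun r => (A r - Abar) ^ 2) volume a b := by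
    intro a b ha hb hab
    apply ContinuousOn.intervalIntegrable
    apply hfc.mono
    rw [Set.uIcc_of_le hab]
    exact Set.Icc_subset_Icc ha.1 hb.2
  have hi1 := hfint s t₀ ⟨le_refl s, hst.le⟩ ht₀ ht₀.1
  have hi2 := hfint t₀ t ht₀ ⟨hst.le, le_refl t⟩ ht₀.2
  have hsplit : (∫ r in s..t₀, (A r - Abar) ^ 2) + (∫ r in t₀..t, (A r - Abar) ^ 2)
      = ∫ r in s..t, (A r - Abar) ^ 2 :=
    intervalIntegral.integral_add_adjacent_intervals hi1 hi2
  have hnn1 : 0 ≤ ∫ r in s..t₀, (A r - Abar) ^ 2 :=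
    intervalIntegral.integral_nonneg ht₀.1 (fun x _ => sq_nonneg _)
  have hnn2 : 0 ≤ ∫ r in t₀..t, (A r - Abar) ^ 2 :=
    intervalIntegral.integral_nonneg ht₀.2 (fun x _ => sq_nonneg _)
  have hpow : ∀ x : ℝ, 0 ≤ x → (C₁ * x ^ γ₁) ^ 2 = C₁ ^ 2 * x ^ (2 * γ₁) := by
    intro x hx
    rw [mul_pow, ← Real.rpow_natCast (x ^ γ₁) 2, ← Real.rpow_mul hx]
    norm_num [mul_comm]
  have final : ∀ L : ℝ, (t - s) / 2 ≤ L →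
      C₁ ^ 2 / (2 ^ (2 * γ₁ + 1) * (2 * γ₁ + 1)) * (t - s) ^ (2 * γ₁ + 1)
        ≤ C₁ ^ 2 * L ^ (2 * γ₁ + 1) / (2 * γ₁ + 1) := by
    intro L hL
    have h1 : ((t - s) / 2) ^ (2 * γ₁ + 1) ≤ L ^ (2 * γ₁ + 1) :=
      Real.rpow_le_rpow (by positivity) hL he.le
    rw [Real.div_rpow hδ.le (by norm_num)] at h1
    have h2e : (0:ℝ) < 2 ^ (2 * γ₁ + 1) := Real.rpow_pos_of_pos two_pos _
    calc C₁ ^ 2 / (2 ^ (2 * γ₁ + 1) * (2 * γ₁ + 1)) * (t - s) ^ (2 * γ₁ + 1)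
        = C₁ ^ 2 * ((t - s) ^ (2 * γ₁ + 1) / 2 ^ (2 * γ₁ + 1)) / (2 * γ₁ + 1) := by
          rw [div_mul_eq_mul_div, mul_div_assoc, mul_div_assoc, div_div]
      _ ≤ C₁ ^ 2 * L ^ (2 * γ₁ + 1) / (2 * γ₁ + 1) := by gcongr
  rcases le_or_gt t₀ ((s + t) / 2) with hhalf | hhalf
  · -- use the right piece [t₀, t]
    have hle : ∀ r ∈ Set.Icc t₀ t, C₁ ^ 2 * (r - t₀) ^ (2 * γ₁) ≤ (A r - Abar) ^ 2 := by
      intro r hr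
      have hb := (hbound t₀ r (hs.trans ht₀.1) hr.1 (hr.2.trans htT)).1
      rw [abs_of_nonneg (sub_nonneg.2 hr.1)] at hb
      have hnn : 0 ≤ C₁ * (r - t₀) ^ γ₁ :=
        mul_nonneg hC₁.le (Real.rpow_nonneg (sub_nonneg.2 hr.1) _)
      calc C₁ ^ 2 * (r - t₀) ^ (2 * γ₁) = (C₁ * (r - t₀) ^ γ₁) ^ 2 :=
            (hpow _ (sub_nonneg.2 hr.1)).symm
        _ ≤ (A r - A t₀) ^ 2 := pow_le_pow_left₀ hnn hb 2
        _ = (A r - Abar) ^ 2 := by rw [hAt₀]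
    have hgint : IntervalIntegrable (fun r => C₁ ^ 2 * (r - t₀) ^ (2 * γ₁)) volume t₀ t := by
      apply ContinuousOn.intervalIntegrable
      exact continuousOn_const.mul
        ((continuousOn_id.sub continuousOn_const).rpow_const (fun x _ => Or.inr h2γ.le))
    have key := intervalIntegral.integral_mono_on ht₀.2 hgint hi2 hle
    rw [intervalIntegral.integral_const_mul, aux_int _ _ _ h2γ] at key
    have hL : (t - s) / 2 ≤ t - t₀ := by linarith
    have := final (t - t₀) hL
    rw [mul_div_assoc] at this
    linarith
  · -- use the left piece [s, t₀]
    have hle : ∀ r ∈ Set.Icc s t₀, C₁ ^ 2 * (t₀ - r) ^ (2 * γ₁) ≤ (A r - Abar) ^ 2 := by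
      intro r hr
      have hb := (hbound r t₀ (hs.trans hr.1) hr.2 ((ht₀.2).trans htT)).1
      rw [abs_of_nonneg (sub_nonneg.2 hr.2)] at hb
      have hnn : 0 ≤ C₁ * (t₀ - r) ^ γ₁ :=
        mul_nonneg hC₁.le (Real.rpow_nonneg (sub_nonneg.2 hr.2) _)
      calc C₁ ^ 2 * (t₀ - r) ^ (2 * γ₁) = (C₁ * (t₀ - r) ^ γ₁) ^ 2 :=
            (hpow _ (sub_nonneg.2 hr.2)).symm
        _ ≤ (A t₀ - A r) ^ 2 := pow_le_pow_left₀ hnn hb 2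
        _ = (A r - Abar) ^ 2 := by rw [hAt₀]; ring
    have hgint : IntervalIntegrable (fun r => C₁ ^ 2 * (t₀ - r) ^ (2 * γ₁)) volume s t₀ := by
      apply ContinuousOn.intervalIntegrable
      exact continuousOn_const.mul
        ((continuousOn_const.sub continuousOn_id).rpow_const (fun x _ => Or.inr h2γ.le))
    have key := intervalIntegral.integral_mono_on ht₀.1 hgint hi1 hle
    rw [intervalIntegral.integral_const_mul, aux_int' _ _ _ h2γ] at key
    have hL : (t - s) / 2 ≤ t₀ - s := by linarith
    have := final (t₀ - s) hL
    rw [mul_div_assoc] at this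
    linarith
end

section
/- Suppose A : [0,T] → ℝ satisfies C₁|t−s|^{γ₁} ≤ A_t − A_s ≤ C₂|t−s|^{γ₂} for all 0 ≤ s ≤ t ≤ T, with 1 ≥ γ₁ ≥ γ₂ > 0. Then for all 0 ≤ s < t ≤ T, 1 ≤ m̃_{s,t}/m_{s,t} ≤ 2^{2γ₁+1} (C₂²(2γ₁+1))/(C₁²(2γ₂+1)) · |t−s|^{−2(γ₁−γ₂)}. -/
open MeasureTheory intervalIntegral Real

/-! The mean `Ā` minimises `c ↦ ∫ (A - c)²`, and taking `c = A s` gives `m ≤ m̃`. For the upper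
bound, an increment bound `C₁ h^γ₁ ≤ A (r + h) - A r` forces `|A r - c| ≥ C₁ |r - (s + t)/2|^γ₁` on
one of the two halves of `[s, t]`, whatever `c` is, so `(t - s) m` is at least a constant times
`(t - s)^(2γ₁+1)`; while `|A r - A s| ≤ C₂ (r - s)^γ₂` bounds `(t - s) m̃` by a constant times
`(t - s)^(2γ₂+1)`. -/

theorem integral_sub_sq_eq_integral_sub_average_sq_add {f : ℝ → ℝ} {a b : ℝ}
    (hf : IntervalIntegrable f volume a b) (hf2 : IntervalIntegrable (fun r => f r ^ 2) volume a b)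
    (c : ℝ) :
    ∫ r in a..b, (f r - c) ^ 2
      = (∫ r in a..b, (f r - (b - a)⁻¹ * ∫ u in a..b, f u) ^ 2)
        + (b - a) * ((b - a)⁻¹ * (∫ u in a..b, f u) - c) ^ 2 := by
  have expand : ∀ d : ℝ, ∫ r in a..b, (f r - d) ^ 2
      = (∫ r in a..b, f r ^ 2) - 2 * d * (∫ r in a..b, f r) + (b - a) * d ^ 2 := by
    intro d
    have hlin := (hf.const_mul (2 * d)).sub (intervalIntegrable_const (c := d ^ 2))
    simp_rw [show ∀ r, (f r - d) ^ 2 = f r ^ 2 - (2 * d * f r - d ^ 2) from fun r => by ring]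
    rw [integral_sub hf2 hlin, integral_sub (hf.const_mul _) intervalIntegrable_const,
      intervalIntegral.integral_const_mul, intervalIntegral.integral_const, smul_eq_mul]
    ring
  set avg := (b - a)⁻¹ * ∫ u in a..b, f u with havg
  have hmean : ∫ u in a..b, f u = (b - a) * avg := by
    rcases eq_or_ne a b with rfl | hab
    · simp
    · rw [havg, ← mul_assoc, mul_inv_cancel₀ (sub_ne_zero.2 hab.symm), one_mul]
  rw [expand, expand, hmean]
  ring

theorem integral_sub_average_sq_le {f : ℝ → ℝ} {a b : ℝ} (hab : a ≤ b)
    (hf : IntervalIntegrable f volume a b) (hf2 : IntervalIntegrable (fun r => f r ^ 2) volume a b)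
    (c : ℝ) :
    ∫ r in a..b, (f r - (b - a)⁻¹ * ∫ u in a..b, f u) ^ 2 ≤ ∫ r in a..b, (f r - c) ^ 2 := by
  rw [integral_sub_sq_eq_integral_sub_average_sq_add hf hf2 c]
  exact le_add_of_nonneg_right (mul_nonneg (sub_nonneg.2 hab) (sq_nonneg _))

theorem integral_sq_mul_rpow_sub_lower {a b γ : ℝ} (C : ℝ) (hab : a ≤ b) (hγ : 0 ≤ γ) :
    ∫ r in a..b, (C * (r - a) ^ γ) ^ 2 = C ^ 2 / (2 * γ + 1) * (b - a) ^ (2 * γ + 1) := by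
  have hsq : Set.EqOn (fun r => (C * (r - a) ^ γ) ^ 2) (fun r => C ^ 2 * (r - a) ^ (2 * γ))
      (Set.uIcc a b) := by
    intro r hr
    rw [Set.uIcc_of_le hab] at hr
    simp only [mul_pow, mul_comm (2 : ℝ), rpow_mul (sub_nonneg.2 hr.1), rpow_two]
  rw [integral_congr hsq, intervalIntegral.integral_const_mul,
    integral_comp_sub_right (· ^ (2 * γ)), sub_self, integral_rpow (Or.inl (by linarith)),
    zero_rpow (by linarith)]
  ring

theorem integral_sq_mul_rpow_sub_upper {a b γ : ℝ} (C : ℝ) (hab : a ≤ b) (hγ : 0 ≤ γ) :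
    ∫ r in a..b, (C * (b - r) ^ γ) ^ 2 = C ^ 2 / (2 * γ + 1) * (b - a) ^ (2 * γ + 1) := by
  have := integral_comp_sub_left (fun r => (C * (r - a) ^ γ) ^ 2) (a + b) (a := a) (b := b)
  simpa only [add_sub_cancel_right, add_sub_cancel_left, integral_sq_mul_rpow_sub_lower C hab hγ,
    show ∀ r, a + b - r - a = b - r from fun r => by ring] using this

theorem le_integral_sub_sq_of_rpow_le_sub {f : ℝ → ℝ} {a b C γ : ℝ} (hab : a ≤ b) (hC : 0 ≤ C)
    (hγ : 0 ≤ γ) (hf : ContinuousOn f (Set.Icc a b))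
    (hinc : ∀ u v, a ≤ u → u ≤ v → v ≤ b → C * (v - u) ^ γ ≤ f v - f u) (c : ℝ) :
    C ^ 2 / (2 ^ (2 * γ + 1) * (2 * γ + 1)) * (b - a) ^ (2 * γ + 1)
      ≤ ∫ r in a..b, (f r - c) ^ 2 := by
  set m := (a + b) / 2 with hm
  have ham : a ≤ m := by linarith
  have hmb : m ≤ b := by linarith
  have hint : ∀ u v, a ≤ u → u ≤ v → v ≤ b →
      IntervalIntegrable (fun r => (f r - c) ^ 2) volume u v := fun u v hau huv hvb =>
    ContinuousOn.intervalIntegrable_of_Icc huv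
      (((hf.sub continuousOn_const).pow 2).mono (Set.Icc_subset_Icc hau hvb))
  have hhalf : C ^ 2 / (2 ^ (2 * γ + 1) * (2 * γ + 1)) * (b - a) ^ (2 * γ + 1)
      = C ^ 2 / (2 * γ + 1) * ((b - a) / 2) ^ (2 * γ + 1) := by
    rw [div_rpow (by linarith) zero_le_two, mul_comm (2 ^ (2 * γ + 1) : ℝ), ← div_div]
    ring
  have hbm : b - m = (b - a) / 2 := by ring
  have hma : m - a = (b - a) / 2 := by ring
  rw [← integral_add_adjacent_intervals (hint a m le_rfl ham hmb) (hint m b ham hmb le_rfl), hhalf]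
  have hleft : 0 ≤ ∫ r in a..m, (f r - c) ^ 2 := integral_nonneg ham fun r _ => sq_nonneg _
  have hright : 0 ≤ ∫ r in m..b, (f r - c) ^ 2 := integral_nonneg hmb fun r _ => sq_nonneg _
  -- on the half of `[a, b]` lying on the far side of `c` from `f m`, `|f r - c| ≥ C |r - m| ^ γ`
  rcases le_total c (f m) with hc | hc
  · rw [← hbm, ← integral_sq_mul_rpow_sub_lower C hmb hγ]
    refine le_add_of_nonneg_of_le hleft (integral_mono_on hmb ?_ (hint m b ham hmb le_rfl) ?_)
    · exact Continuous.intervalIntegrable (by fun_prop (disch := assumption)) m b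
    · intro r hr
      have := hinc m r ham hr.1 hr.2
      exact pow_le_pow_left₀ (mul_nonneg hC (rpow_nonneg (sub_nonneg.2 hr.1) _)) (by linarith) 2
  · rw [← hma, ← integral_sq_mul_rpow_sub_upper C ham hγ]
    refine le_add_of_le_of_nonneg (integral_mono_on ham ?_ (hint a m le_rfl ham hmb) ?_) hright
    · exact Continuous.intervalIntegrable (by fun_prop (disch := assumption)) a m
    · intro r hr
      have := hinc r m hr.1 hr.2 hmb
      rw [← neg_sq (f r - c), neg_sub]
      exact pow_le_pow_left₀ (mul_nonneg hC (rpow_nonneg (sub_nonneg.2 hr.2) _)) (by linarith) 2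

theorem integral_sub_sq_le_of_abs_sub_le_rpow {f : ℝ → ℝ} {a b C γ : ℝ} (hab : a ≤ b)
    (hγ : 0 ≤ γ) (hf : ContinuousOn f (Set.Icc a b))
    (hf_le : ∀ r ∈ Set.Icc a b, |f r - f a| ≤ C * (r - a) ^ γ) :
    ∫ r in a..b, (f r - f a) ^ 2 ≤ C ^ 2 / (2 * γ + 1) * (b - a) ^ (2 * γ + 1) := by
  rw [← integral_sq_mul_rpow_sub_lower C hab hγ]
  refine integral_mono_on hab ((hf.sub continuousOn_const).pow 2 |>.intervalIntegrable_of_Icc hab)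
    (Continuous.intervalIntegrable (by fun_prop (disch := assumption)) a b) fun r hr => ?_
  rw [← sq_abs]
  exact pow_le_pow_left₀ (abs_nonneg _) (hf_le r hr) 2

theorem stmt5_general (T C₁ C₂ γ₁ γ₂ : ℝ) (A : ℝ → ℝ)
    (hγ : γ₂ ≤ γ₁) (hγ₂ : 0 < γ₂) (hC₁ : 0 < C₁)
    (hA : ContinuousOn A (Set.Icc 0 T))
    (hbound : ∀ s t : ℝ, 0 ≤ s → s ≤ t → t ≤ T →
      C₁ * |t - s| ^ γ₁ ≤ A t - A s ∧ A t - A s ≤ C₂ * |t - s| ^ γ₂)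
    (s t : ℝ) (hs : 0 ≤ s) (hst : s < t) (htT : t ≤ T) :
    1 ≤ ((t - s)⁻¹ * ∫ r in s..t, (A r - A s) ^ 2)
        / ((t - s)⁻¹ * ∫ r in s..t, (A r - (t - s)⁻¹ * ∫ u in s..t, A u) ^ 2)
    ∧ ((t - s)⁻¹ * ∫ r in s..t, (A r - A s) ^ 2)
        / ((t - s)⁻¹ * ∫ r in s..t, (A r - (t - s)⁻¹ * ∫ u in s..t, A u) ^ 2)
      ≤ 2 ^ (2 * γ₁ + 1) * (C₂ ^ 2 * (2 * γ₁ + 1)) / (C₁ ^ 2 * (2 * γ₂ + 1))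
          * |t - s| ^ (-(2 * (γ₁ - γ₂))) := by
  have hts : 0 < t - s := sub_pos.2 hst
  have hγ₁ : 0 < γ₁ := hγ₂.trans_le hγ
  have hA' : ContinuousOn A (Set.Icc s t) := hA.mono (Set.Icc_subset_Icc hs htT)
  have hbound' : ∀ u v, s ≤ u → u ≤ v → v ≤ t →
      C₁ * (v - u) ^ γ₁ ≤ A v - A u ∧ A v - A u ≤ C₂ * (v - u) ^ γ₂ := fun u v hu huv hv => by
    simpa only [abs_of_nonneg (sub_nonneg.2 huv)] using hbound u v (by linarith) huv (by linarith)
  set M := ∫ r in s..t, (A r - (t - s)⁻¹ * ∫ u in s..t, A u) ^ 2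
  set M' := ∫ r in s..t, (A r - A s) ^ 2
  have hM_le : M ≤ M' := integral_sub_average_sq_le hst.le (hA'.intervalIntegrable_of_Icc hst.le)
    ((hA'.pow 2).intervalIntegrable_of_Icc hst.le) (A s)
  have hM_ge : C₁ ^ 2 / (2 ^ (2 * γ₁ + 1) * (2 * γ₁ + 1)) * (t - s) ^ (2 * γ₁ + 1) ≤ M :=
    le_integral_sub_sq_of_rpow_le_sub hst.le hC₁.le hγ₁.le hA'
      (fun u v hu huv hv => (hbound' u v hu huv hv).1) _
  have hM'_le : M' ≤ C₂ ^ 2 / (2 * γ₂ + 1) * (t - s) ^ (2 * γ₂ + 1) :=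
    integral_sub_sq_le_of_abs_sub_le_rpow hst.le hγ₂.le hA' fun r hr => by
      obtain ⟨hlo, hhi⟩ := hbound' s r le_rfl hr.1 hr.2
      have : 0 ≤ C₁ * (r - s) ^ γ₁ := mul_nonneg hC₁.le (rpow_nonneg (sub_nonneg.2 hr.1) _)
      exact abs_le.2 ⟨by linarith, hhi⟩
  have hM_pos : 0 < M := lt_of_lt_of_le (by positivity) hM_ge
  rw [abs_of_pos hts, mul_div_mul_left _ _ (inv_ne_zero hts.ne')]
  refine ⟨(one_le_div hM_pos).2 hM_le, ?_⟩
  calc M' / M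
      ≤ C₂ ^ 2 / (2 * γ₂ + 1) * (t - s) ^ (2 * γ₂ + 1)
        / (C₁ ^ 2 / (2 ^ (2 * γ₁ + 1) * (2 * γ₁ + 1)) * (t - s) ^ (2 * γ₁ + 1)) :=
        div_le_div₀ (by positivity) hM'_le (by positivity) hM_ge
    _ = _ := by
      rw [show -(2 * (γ₁ - γ₂)) = (2 * γ₂ + 1) - (2 * γ₁ + 1) by ring, rpow_sub hts]
      field_simp

/-- Bounds on the ratio `m̃_{s,t}/m_{s,t}` for a two-sided Hölder increasing `A`. -/
theorem stmt5 (T C₁ C₂ γ₁ γ₂ : ℝ) (A : ℝ → ℝ)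
    (hγ₁ : γ₁ ≤ 1) (hγ : γ₂ ≤ γ₁) (hγ₂ : 0 < γ₂) (hC₁ : 0 < C₁) (hC₂ : 0 < C₂)
    (hA : ContinuousOn A (Set.Icc 0 T))
    (hbound : ∀ s t : ℝ, 0 ≤ s → s ≤ t → t ≤ T →
      C₁ * |t - s| ^ γ₁ ≤ A t - A s ∧ A t - A s ≤ C₂ * |t - s| ^ γ₂)
    (s t : ℝ) (hs : 0 ≤ s) (hst : s < t) (htT : t ≤ T) :
    1 ≤ ((t - s)⁻¹ * ∫ r in s..t, (A r - A s) ^ 2)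
        / ((t - s)⁻¹ * ∫ r in s..t, (A r - (t - s)⁻¹ * ∫ u in s..t, A u) ^ 2)
    ∧ ((t - s)⁻¹ * ∫ r in s..t, (A r - A s) ^ 2)
        / ((t - s)⁻¹ * ∫ r in s..t, (A r - (t - s)⁻¹ * ∫ u in s..t, A u) ^ 2)
      ≤ 2 ^ (2 * γ₁ + 1) * (C₂ ^ 2 * (2 * γ₁ + 1)) / (C₁ ^ 2 * (2 * γ₂ + 1))
          * |t - s| ^ (-(2 * (γ₁ - γ₂))) :=
  stmt5_general T C₁ C₂ γ₁ γ₂ A hγ hγ₂ hC₁ hA hbound s t hs hst htT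
end

section
/- Let A_t = ∫_0^t ρ(u) du with ε ≤ ρ ≤ 1/ε a.e. for some ε > 0. Then there exists C > 0 such that for all 0 ≤ s < t ≤ T: C^{-1}(t−s)² ≤ m_{s,t} ≤ C(t−s)² and 1 ≤ m̃_{s,t}/m_{s,t} ≤ C. -/
/-!
Since `ε ≤ ρ ≤ 1/ε`, the primitive `A` is bi-Lipschitz: `ε (y - x) ≤ A y - A x ≤ (y - x) / ε`.
The upper Lipschitz bound gives `m̃_{s,t} ≤ (t - s)² / (3 ε²)`. Whatever the constant `c`, `A`
moves away from `c` at speed at least `ε` on one of the two halves of `[s, t]`, so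
`∫_s^t (A - c)² ≥ ε² (t - s)³ / 24`; with `c = Ā_{s,t}` this is the lower bound on `m_{s,t}`.
Finally `m_{s,t} ≤ m̃_{s,t}` because the mean minimises `c ↦ ∫_s^t (A - c)²`.
-/

open MeasureTheory intervalIntegral Set

section Primitive

variable {ρ : ℝ → ℝ} {a b m M : ℝ}

theorem integrableOn_Icc_of_ae_bounds (hρ : AEStronglyMeasurable ρ volume)
    (hb : ∀ᵐ u, u ∈ Icc a b → ρ u ∈ Icc m M) : IntegrableOn ρ (Icc a b) := by
  refine IntegrableOn.of_bound measure_Icc_lt_top hρ.restrict (max |m| |M|) ?_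
  filter_upwards [(ae_restrict_iff' measurableSet_Icc).2 hb] with u hu
  exact abs_le_max_abs_abs hu.1 hu.2

theorem integral_mem_Icc_of_ae_bounds (hab : a ≤ b) (hint : IntervalIntegrable ρ volume a b)
    (hb : ∀ᵐ u, u ∈ Icc a b → ρ u ∈ Icc m M) :
    ∫ u in a..b, ρ u ∈ Icc (m * (b - a)) (M * (b - a)) := by
  have hb' := (ae_restrict_iff' (μ := volume) measurableSet_Icc).2 hb
  constructor
  · simpa [mul_comm] using
      integral_mono_ae_restrict hab intervalIntegrable_const hint (hb'.mono fun _ h => h.1)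
  · simpa [mul_comm] using
      integral_mono_ae_restrict hab hint intervalIntegrable_const (hb'.mono fun _ h => h.2)

theorem sub_primitive_mem_Icc (hρ : IntegrableOn ρ (Icc a b))
    (hb : ∀ᵐ u, u ∈ Icc a b → ρ u ∈ Icc m M) {x y : ℝ} (hx : x ∈ Icc a b)
    (hy : y ∈ Icc a b) (hxy : x ≤ y) :
    (∫ u in a..y, ρ u) - ∫ u in a..x, ρ u ∈ Icc (m * (y - x)) (M * (y - x)) := by
  have hint : ∀ z ∈ Icc a b, ∀ w ∈ Icc a b, IntervalIntegrable ρ volume z w := fun z hz w hw =>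
    (hρ.mono_set (uIcc_subset_Icc hz hw)).intervalIntegrable
  have ha : a ∈ Icc a b := ⟨le_rfl, hx.1.trans hx.2⟩
  rw [integral_interval_sub_left (hint a ha y hy) (hint a ha x hx)]
  exact integral_mem_Icc_of_ae_bounds hxy (hint x hx y hy)
    (hb.mono fun u h hu => h (Icc_subset_Icc hx.1 hy.2 hu))

end Primitive

/-- `m_{s,t} = meanSqDev A s t (intervalMean A s t)` and `m̃_{s,t} = meanSqDev A s t (A s)`. -/
noncomputable def intervalMean (f : ℝ → ℝ) (a b : ℝ) : ℝ := (b - a)⁻¹ * ∫ u in a..b, f u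

noncomputable def meanSqDev (f : ℝ → ℝ) (a b c : ℝ) : ℝ := (b - a)⁻¹ * ∫ r in a..b, (f r - c) ^ 2

section Deviation

variable {f : ℝ → ℝ} {a b c ε L : ℝ}

theorem integral_sub_sq (x₀ : ℝ) :
    ∫ r in a..b, (r - x₀) ^ 2 = ((b - x₀) ^ 3 - (a - x₀) ^ 3) / 3 := by
  rw [integral_comp_sub_right (fun x => x ^ 2), integral_pow]
  norm_num

theorem meanSqDev_eq_meanSqDev_intervalMean_add (hab : a ≠ b)
    (hf : IntervalIntegrable f volume a b)
    (hf2 : IntervalIntegrable (fun r => (f r - c) ^ 2) volume a b) :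
    meanSqDev f a b c = meanSqDev f a b (intervalMean f a b) + (intervalMean f a b - c) ^ 2 := by
  set m := intervalMean f a b with hm_def
  have hδ : b - a ≠ 0 := sub_ne_zero.2 hab.symm
  have hfc : IntervalIntegrable (fun r => f r - c) volume a b := hf.sub intervalIntegrable_const
  have hmean : ∫ r in a..b, (f r - c) = (b - a) * (m - c) := by
    rw [integral_sub hf intervalIntegrable_const, intervalIntegral.integral_const, smul_eq_mul,
      hm_def, intervalMean, mul_sub, mul_inv_cancel_left₀ hδ]
  have hexp : ∀ r, (f r - m) ^ 2 = (f r - c) ^ 2 - 2 * (m - c) * (f r - c) + (m - c) ^ 2 :=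
    fun r => by ring
  simp only [meanSqDev, hexp]
  rw [integral_add (hf2.sub (hfc.const_mul _)) intervalIntegrable_const,
    integral_sub hf2 (hfc.const_mul _), intervalIntegral.integral_const_mul, hmean,
    intervalIntegral.integral_const, smul_eq_mul]
  field_simp
  ring

theorem meanSqDev_intervalMean_le (hab : a ≠ b) (hf : IntervalIntegrable f volume a b)
    (hf2 : IntervalIntegrable (fun r => (f r - c) ^ 2) volume a b) :
    meanSqDev f a b (intervalMean f a b) ≤ meanSqDev f a b c := by
  rw [meanSqDev_eq_meanSqDev_intervalMean_add hab hf hf2]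
  exact le_add_of_nonneg_right (sq_nonneg _)

theorem mul_integral_sub_sq_le_integral_sq_sub (hε : 0 ≤ ε) (hab : a ≤ b)
    (hf : IntervalIntegrable (fun r => (f r - c) ^ 2) volume a b) (x₀ : ℝ)
    (h : ∀ r ∈ Icc a b, ε * |r - x₀| ≤ |f r - c|) :
    ε ^ 2 * ((b - x₀) ^ 3 - (a - x₀) ^ 3) / 3 ≤ ∫ r in a..b, (f r - c) ^ 2 := by
  have hpt : ∀ r ∈ Icc a b, ε ^ 2 * (r - x₀) ^ 2 ≤ (f r - c) ^ 2 := fun r hr => by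
    simpa only [mul_pow, sq_abs] using pow_le_pow_left₀ (by positivity) (h r hr) 2
  have := integral_mono_on hab (Continuous.intervalIntegrable (by fun_prop) a b) hf hpt
  rwa [intervalIntegral.integral_const_mul, integral_sub_sq, ← mul_div_assoc] at this

theorem mul_cube_div_le_integral_sq_sub (hε : 0 ≤ ε) (hab : a ≤ b)
    (hinc : ∀ x ∈ Icc a b, ∀ y ∈ Icc a b, x ≤ y → ε * (y - x) ≤ f y - f x)
    (hf : IntervalIntegrable (fun r => (f r - c) ^ 2) volume a b) :
    ε ^ 2 * (b - a) ^ 3 / 24 ≤ ∫ r in a..b, (f r - c) ^ 2 := by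
  set m := (a + b) / 2 with hm_def
  have hm : m ∈ Icc a b := ⟨by linarith, by linarith⟩
  have hleft := hf.mono_set (uIcc_subset_uIcc left_mem_uIcc (mem_uIcc_of_le hm.1 hm.2))
  have hright := hf.mono_set (uIcc_subset_uIcc (mem_uIcc_of_le hm.1 hm.2) right_mem_uIcc)
  have hleft0 : 0 ≤ ∫ r in a..m, (f r - c) ^ 2 := integral_nonneg hm.1 fun _ _ => sq_nonneg _
  have hright0 : 0 ≤ ∫ r in m..b, (f r - c) ^ 2 := integral_nonneg hm.2 fun _ _ => sq_nonneg _
  rw [← integral_add_adjacent_intervals hleft hright]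
  rcases le_total c (f m) with hc | hc
  · have := mul_integral_sub_sq_le_integral_sq_sub hε hm.2 hright m fun r hr => by
      have hr' : r ∈ Icc a b := ⟨hm.1.trans hr.1, hr.2⟩
      rw [abs_of_nonneg (sub_nonneg.2 hr.1)]
      linarith [hinc m hm r hr' hr.1, le_abs_self (f r - c)]
    have hcube : ε ^ 2 * ((b - m) ^ 3 - (m - m) ^ 3) / 3 = ε ^ 2 * (b - a) ^ 3 / 24 := by
      rw [hm_def]; ring
    linarith
  · have := mul_integral_sub_sq_le_integral_sq_sub hε hm.1 hleft m fun r hr => by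
      have hr' : r ∈ Icc a b := ⟨hr.1, hr.2.trans hm.2⟩
      rw [abs_of_nonpos (sub_nonpos.2 hr.2)]
      linarith [hinc r hr' m hm hr.2, neg_abs_le (f r - c)]
    have hcube : ε ^ 2 * ((m - m) ^ 3 - (a - m) ^ 3) / 3 = ε ^ 2 * (b - a) ^ 3 / 24 := by
      rw [hm_def]; ring
    linarith

theorem integral_sq_sub_left_le (hab : a ≤ b) (hL : ∀ r ∈ Icc a b, |f r - f a| ≤ L * (r - a)) :
    ∫ r in a..b, (f r - f a) ^ 2 ≤ L ^ 2 * (b - a) ^ 3 / 3 := by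
  have hpt : ∀ r ∈ Ioc a b, (f r - f a) ^ 2 ≤ L ^ 2 * (r - a) ^ 2 := fun r hr => by
    simpa only [mul_pow, sq_abs] using
      pow_le_pow_left₀ (abs_nonneg _) (hL r (Ioc_subset_Icc_self hr)) 2
  have hint : IntervalIntegrable (fun r => L ^ 2 * (r - a) ^ 2) volume a b :=
    Continuous.intervalIntegrable (by fun_prop) a b
  calc ∫ r in a..b, (f r - f a) ^ 2 ≤ ∫ r in a..b, L ^ 2 * (r - a) ^ 2 := by
        rw [integral_of_le hab, integral_of_le hab]
        exact integral_mono_of_nonneg (.of_forall fun _ => sq_nonneg _) hint.1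
          ((ae_restrict_iff' measurableSet_Ioc).2 (.of_forall hpt))
    _ = L ^ 2 * (b - a) ^ 3 / 3 := by
      rw [intervalIntegral.integral_const_mul, integral_sub_sq]
      ring

theorem meanSqDev_bounds (hε : 0 ≤ ε) (hab : a < b) (hf : ContinuousOn f (Icc a b))
    (hinc : ∀ x ∈ Icc a b, ∀ y ∈ Icc a b, x ≤ y → f y - f x ∈ Icc (ε * (y - x)) (L * (y - x))) :
    ε ^ 2 / 24 * (b - a) ^ 2 ≤ meanSqDev f a b (intervalMean f a b) ∧
      meanSqDev f a b (intervalMean f a b) ≤ meanSqDev f a b (f a) ∧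
      meanSqDev f a b (f a) ≤ L ^ 2 / 3 * (b - a) ^ 2 := by
  have hδ : 0 < b - a := sub_pos.2 hab
  have hsq : ∀ c, IntervalIntegrable (fun r => (f r - c) ^ 2) volume a b := fun c =>
    ((hf.sub continuousOn_const).pow 2).intervalIntegrable_of_Icc hab.le
  refine ⟨?_, meanSqDev_intervalMean_le hab.ne (hf.intervalIntegrable_of_Icc hab.le) (hsq _), ?_⟩
  · rw [meanSqDev, le_inv_mul_iff₀ hδ]
    calc (b - a) * (ε ^ 2 / 24 * (b - a) ^ 2) = ε ^ 2 * (b - a) ^ 3 / 24 := by ring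
      _ ≤ _ := mul_cube_div_le_integral_sq_sub hε hab.le
          (fun x hx y hy hxy => (hinc x hx y hy hxy).1) (hsq _)
  · rw [meanSqDev, inv_mul_le_iff₀ hδ]
    calc _ ≤ L ^ 2 * (b - a) ^ 3 / 3 := integral_sq_sub_left_le hab.le fun r hr => by
          have ha : a ∈ Icc a b := left_mem_Icc.2 hab.le
          obtain ⟨hlow, hup⟩ := hinc a ha r hr hr.1
          rw [abs_of_nonneg ((mul_nonneg hε (sub_nonneg.2 hr.1)).trans hlow)]
          exact hup
      _ = (b - a) * (L ^ 2 / 3 * (b - a) ^ 2) := by ring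

end Deviation

theorem exists_const_bounds_of_sq_sandwich {k K : ℝ} (hk : 0 < k) (hK : 0 < K) :
    ∃ C > 0, ∀ δ m m' : ℝ, 0 < δ → k * δ ^ 2 ≤ m → m ≤ m' → m' ≤ K * δ ^ 2 →
      C⁻¹ * δ ^ 2 ≤ m ∧ m ≤ C * δ ^ 2 ∧ 1 ≤ m' / m ∧ m' / m ≤ C := by
  refine ⟨k⁻¹ + K + K / k, by positivity, fun δ m m' hδ hkm hmm' hm'K => ?_⟩
  have hδ2 : 0 < δ ^ 2 := by positivity
  have hm : 0 < m := (mul_pos hk hδ2).trans_le hkm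
  have hCk : (k⁻¹ + K + K / k)⁻¹ ≤ k :=
    inv_le_of_inv_le₀ hk (by linarith [div_pos hK hk])
  refine ⟨(mul_le_mul_of_nonneg_right hCk hδ2.le).trans hkm, ?_, (one_le_div hm).2 hmm', ?_⟩
  · nlinarith [inv_pos.2 hk, div_pos hK hk]
  · rw [div_le_iff₀ hm]
    calc m' ≤ K / k * (k * δ ^ 2) := by rwa [← mul_assoc, div_mul_cancel₀ K hk.ne']
      _ ≤ K / k * m := mul_le_mul_of_nonneg_left hkm (div_pos hK hk).le
      _ ≤ (k⁻¹ + K + K / k) * m := by nlinarith [inv_pos.2 hk]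

theorem stmt6_general (T ε : ℝ) (hε : 0 < ε) (ρ : ℝ → ℝ) (hmeas : Measurable ρ)
    (hρ : ∀ᵐ u ∂volume, u ∈ Set.Icc (0 : ℝ) T → ε ≤ ρ u ∧ ρ u ≤ 1 / ε)
    (A : ℝ → ℝ) (hA : ∀ t, A t = ∫ u in (0 : ℝ)..t, ρ u) :
    ∃ C > 0, ∀ s t : ℝ, 0 ≤ s → s < t → t ≤ T →
      (C⁻¹ * (t - s) ^ 2
          ≤ (t - s)⁻¹ * ∫ r in s..t, (A r - (t - s)⁻¹ * ∫ u in s..t, A u) ^ 2)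
      ∧ ((t - s)⁻¹ * ∫ r in s..t, (A r - (t - s)⁻¹ * ∫ u in s..t, A u) ^ 2
          ≤ C * (t - s) ^ 2)
      ∧ (1 ≤ ((t - s)⁻¹ * ∫ r in s..t, (A r - A s) ^ 2)
            / ((t - s)⁻¹ * ∫ r in s..t, (A r - (t - s)⁻¹ * ∫ u in s..t, A u) ^ 2))
      ∧ (((t - s)⁻¹ * ∫ r in s..t, (A r - A s) ^ 2)
            / ((t - s)⁻¹ * ∫ r in s..t, (A r - (t - s)⁻¹ * ∫ u in s..t, A u) ^ 2)
          ≤ C) := by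
  obtain ⟨C, hC, hCbounds⟩ := exists_const_bounds_of_sq_sandwich (k := ε ^ 2 / 24)
    (K := (1 / ε) ^ 2 / 3) (by positivity) (by positivity)
  refine ⟨C, hC, fun s t hs hst htT => ?_⟩
  have hρint := integrableOn_Icc_of_ae_bounds hmeas.aestronglyMeasurable hρ
  have hsT : Icc s t ⊆ Icc 0 T := Icc_subset_Icc hs htT
  obtain rfl : A = fun t => ∫ u in (0 : ℝ)..t, ρ u := funext hA
  have hAcont : ContinuousOn (fun t => ∫ u in (0 : ℝ)..t, ρ u) (Icc s t) :=
    (continuousOn_primitive_interval (hρint.mono_set (uIcc_subset_Icc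
      ⟨le_rfl, hs.trans (hst.le.trans htT)⟩ ⟨hs.trans hst.le, htT⟩))).mono
      ((Icc_subset_Icc_left hs).trans Icc_subset_uIcc)
  obtain ⟨hlow, hmid, hup⟩ := meanSqDev_bounds hε.le hst hAcont
    fun x hx y hy hxy => sub_primitive_mem_Icc hρint hρ (hsT hx) (hsT hy) hxy
  exact hCbounds (t - s) _ _ (sub_pos.2 hst) hlow hmid hup

/-- For `A_t = ∫_0^t ρ` with `ε ≤ ρ ≤ 1/ε` a.e., `m_{s,t}` is of order `(t−s)²`
and `m̃_{s,t}/m_{s,t}` is bounded. -/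
theorem stmt6 (T ε : ℝ) (hT : 0 < T) (hε : 0 < ε) (ρ : ℝ → ℝ) (hmeas : Measurable ρ)
    (hρ : ∀ᵐ u ∂volume, u ∈ Set.Icc (0 : ℝ) T → ε ≤ ρ u ∧ ρ u ≤ 1 / ε)
    (A : ℝ → ℝ) (hA : ∀ t, A t = ∫ u in (0 : ℝ)..t, ρ u) :
    ∃ C > 0, ∀ s t : ℝ, 0 ≤ s → s < t → t ≤ T →
      (C⁻¹ * (t - s) ^ 2
          ≤ (t - s)⁻¹ * ∫ r in s..t, (A r - (t - s)⁻¹ * ∫ u in s..t, A u) ^ 2)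
      ∧ ((t - s)⁻¹ * ∫ r in s..t, (A r - (t - s)⁻¹ * ∫ u in s..t, A u) ^ 2
          ≤ C * (t - s) ^ 2)
      ∧ (1 ≤ ((t - s)⁻¹ * ∫ r in s..t, (A r - A s) ^ 2)
            / ((t - s)⁻¹ * ∫ r in s..t, (A r - (t - s)⁻¹ * ∫ u in s..t, A u) ^ 2))
      ∧ (((t - s)⁻¹ * ∫ r in s..t, (A r - A s) ^ 2)
            / ((t - s)⁻¹ * ∫ r in s..t, (A r - (t - s)⁻¹ * ∫ u in s..t, A u) ^ 2)
          ≤ C) :=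
  stmt6_general T ε hε ρ hmeas hρ A hA
end

section
/- Let 0 ≤ s < t, A : [0,T] → ℝ continuous with m_{s,t} > 0, a > 0, and w = (w₁, w₂) ∈ ℝ². Then the quadratic form of the inverse covariance matrix satisfies a ⟨Σ_{s,t}(a)^{-1} w, w⟩ = (1/((t−s)² m_{s,t})) ∫_s^t ((A_r − A_s) w₁ + w₂)² dr. In particular ⟨Σ_{s,t}(a)^{-1} w, w⟩ ≥ 0. -/
/-!
The inverse of a `2 × 2` matrix is its adjugate over its determinant, so with
`Iₖ = ∫ (A - A s)ᵏ` and `D = (t - s) I₂ - I₁²` the quadratic form of `Σ⁻¹` is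
`(I₂ w₁² + 2 I₁ w₁ w₂ + (t - s) w₂²) / (a D)`, whose numerator is
`∫ ((A - A s) w₁ + w₂)²` expanded. Recentring the variance from the mean `Ā` to `A s` gives
`D = (t - s)² m`, and since both integrals are integrals of squares the form is nonnegative.
-/

open MeasureTheory intervalIntegral Matrix

theorem Matrix.inv_smul_fin_two_mulVec_dotProduct {K : Type*} [Field K] (a p q r : K)
    (w : Fin 2 → K) :
    (a • !![p, -q; -q, r])⁻¹ *ᵥ w ⬝ᵥ w
      = (a * (p * r - q ^ 2))⁻¹ * (r * w 0 ^ 2 + 2 * q * w 0 * w 1 + p * w 1 ^ 2) := by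
  obtain rfl | ha := eq_or_ne a 0
  · simp
  rw [inv_def, det_smul, det_fin_two_of, adjugate_smul, adjugate_fin_two_of, Ring.inverse_eq_inv]
  simp only [Fintype.card_fin, neg_neg, mulVec, dotProduct, Fin.sum_univ_two, smul_apply,
    of_apply, cons_val', cons_val_zero, cons_val_one, empty_val', cons_val_fin_one, smul_eq_mul]
  field_simp
  ring

theorem intervalIntegral.integral_mul_add_sq {f : ℝ → ℝ} {s t : ℝ}
    (hf : IntervalIntegrable f volume s t)
    (hf2 : IntervalIntegrable (fun r => f r ^ 2) volume s t) (x y : ℝ) :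
    ∫ r in s..t, (f r * x + y) ^ 2
      = x ^ 2 * (∫ r in s..t, f r ^ 2) + 2 * x * y * (∫ r in s..t, f r) + (t - s) * y ^ 2 := by
  have expand : ∀ r, (f r * x + y) ^ 2 = x ^ 2 * f r ^ 2 + 2 * x * y * f r + y ^ 2 :=
    fun r => by ring
  simp only [expand]
  rw [integral_add ((hf2.const_mul _).add (hf.const_mul _)) intervalIntegrable_const,
    integral_add (hf2.const_mul _) (hf.const_mul _), integral_const_mul, integral_const_mul,
    integral_const, smul_eq_mul]

noncomputable section

/-- `Σ_{s,t}(a)`. -/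
def covarianceMatrix (A : ℝ → ℝ) (s t a : ℝ) : Matrix (Fin 2) (Fin 2) ℝ :=
  a • !![t - s, -(∫ r in s..t, (A r - A s));
         -(∫ r in s..t, (A r - A s)), ∫ r in s..t, (A r - A s) ^ 2]

/-- `m_{s,t}`. -/
def meanSqDeviation (A : ℝ → ℝ) (s t : ℝ) : ℝ :=
  (t - s)⁻¹ * ∫ r in s..t, (A r - (t - s)⁻¹ * ∫ u in s..t, A u) ^ 2

end

theorem meanSqDeviation_nonneg (A : ℝ → ℝ) {s t : ℝ} (hst : s ≤ t) :
    0 ≤ meanSqDeviation A s t :=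
  mul_nonneg (inv_nonneg.mpr (sub_nonneg.mpr hst))
    (integral_nonneg hst fun _ _ => sq_nonneg _)

theorem sub_sq_mul_meanSqDeviation {A : ℝ → ℝ} {s t : ℝ} (hst : s ≠ t) (c : ℝ)
    (hA : IntervalIntegrable A volume s t)
    (hA2 : IntervalIntegrable (fun r => (A r - c) ^ 2) volume s t) :
    (t - s) ^ 2 * meanSqDeviation A s t
      = (t - s) * (∫ r in s..t, (A r - c) ^ 2) - (∫ r in s..t, A r - c) ^ 2 := by
  have hts : t - s ≠ 0 := sub_ne_zero.mpr hst.symm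
  have hAc := integral_sub hA (intervalIntegrable_const (c := c))
  rw [intervalIntegral.integral_const, smul_eq_mul] at hAc
  set d := (t - s)⁻¹ * (∫ u in s..t, A u) - c
  have hd : (t - s) * d = ∫ r in s..t, A r - c := by
    rw [hAc, mul_sub, mul_inv_cancel_left₀ hts]
  have recentre : ∀ r, A r - (t - s)⁻¹ * ∫ u in s..t, A u = (A r - c) * 1 + -d :=
    fun r => by ring
  rw [meanSqDeviation, sq, mul_assoc, mul_inv_cancel_left₀ hts]
  simp only [recentre, integral_mul_add_sq (hA.sub intervalIntegrable_const) hA2]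
  linear_combination (-(∫ r in s..t, A r - c) + (t - s) * d) * hd

theorem mul_covarianceMatrix_inv_mulVec_dotProduct {A : ℝ → ℝ} {s t a : ℝ} (ha : a ≠ 0)
    (hst : s ≠ t) (hA : IntervalIntegrable A volume s t)
    (hA2 : IntervalIntegrable (fun r => (A r - A s) ^ 2) volume s t) (w : Fin 2 → ℝ) :
    a * ((covarianceMatrix A s t a)⁻¹ *ᵥ w ⬝ᵥ w)
      = 1 / ((t - s) ^ 2 * meanSqDeviation A s t)
          * ∫ r in s..t, ((A r - A s) * w 0 + w 1) ^ 2 := by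
  rw [covarianceMatrix, inv_smul_fin_two_mulVec_dotProduct,
    integral_mul_add_sq (hA.sub intervalIntegrable_const) hA2,
    sub_sq_mul_meanSqDeviation hst (A s) hA hA2, mul_inv, one_div]
  field_simp

theorem stmt9_general (T a : ℝ) (ha : 0 < a) (A : ℝ → ℝ) (hA : ContinuousOn A (Set.Icc 0 T))
    (s t : ℝ) (hs : 0 ≤ s) (hst : s < t) (htT : t ≤ T)
    (w : Fin 2 → ℝ) :
    a * ((a • !![t - s, -(∫ r in s..t, (A r - A s));
                 -(∫ r in s..t, (A r - A s)), ∫ r in s..t, (A r - A s) ^ 2])⁻¹.mulVec w ⬝ᵥ w)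
      = (1 / ((t - s) ^ 2
            * ((t - s)⁻¹ * ∫ r in s..t, (A r - (t - s)⁻¹ * ∫ u in s..t, A u) ^ 2)))
          * ∫ r in s..t, ((A r - A s) * w 0 + w 1) ^ 2
    ∧ 0 ≤ (a • !![t - s, -(∫ r in s..t, (A r - A s));
                  -(∫ r in s..t, (A r - A s)), ∫ r in s..t, (A r - A s) ^ 2])⁻¹.mulVec w ⬝ᵥ w := by
  have hAst : ContinuousOn A (Set.uIcc s t) :=
    hA.mono (by rw [Set.uIcc_of_le hst.le]; exact Set.Icc_subset_Icc hs htT)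
  have hid := mul_covarianceMatrix_inv_mulVec_dotProduct ha.ne' hst.ne hAst.intervalIntegrable
    ((hAst.sub continuousOn_const).pow 2).intervalIntegrable w
  have hrhs : 0 ≤ 1 / ((t - s) ^ 2 * meanSqDeviation A s t)
      * ∫ r in s..t, ((A r - A s) * w 0 + w 1) ^ 2 :=
    mul_nonneg (one_div_nonneg.mpr (mul_nonneg (sq_nonneg _) (meanSqDeviation_nonneg A hst.le)))
      (integral_nonneg hst.le fun _ _ => sq_nonneg _)
  exact ⟨hid, nonneg_of_mul_nonneg_right (hid ▸ hrhs) ha⟩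

/-- Quadratic form identity for the inverse covariance matrix, and its nonnegativity. -/
theorem stmt9 (T a : ℝ) (ha : 0 < a) (A : ℝ → ℝ) (hA : ContinuousOn A (Set.Icc 0 T))
    (s t : ℝ) (hs : 0 ≤ s) (hst : s < t) (htT : t ≤ T)
    (hm : 0 < (t - s)⁻¹ * ∫ r in s..t, (A r - (t - s)⁻¹ * ∫ u in s..t, A u) ^ 2)
    (w : Fin 2 → ℝ) :
    a * ((a • !![t - s, -(∫ r in s..t, (A r - A s));
                 -(∫ r in s..t, (A r - A s)), ∫ r in s..t, (A r - A s) ^ 2])⁻¹.mulVec w ⬝ᵥ w)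
      = (1 / ((t - s) ^ 2
            * ((t - s)⁻¹ * ∫ r in s..t, (A r - (t - s)⁻¹ * ∫ u in s..t, A u) ^ 2)))
          * ∫ r in s..t, ((A r - A s) * w 0 + w 1) ^ 2
    ∧ 0 ≤ (a • !![t - s, -(∫ r in s..t, (A r - A s));
                  -(∫ r in s..t, (A r - A s)), ∫ r in s..t, (A r - A s) ^ 2])⁻¹.mulVec w ⬝ᵥ w :=
  stmt9_general T a ha A hA s t hs hst htT w
end

section
/- In the setting of the previous context, the first component of Σ_{s,t}(a)^{-1} w satisfies a |(Σ_{s,t}(a)^{-1} w)₁| ≤ sqrt( m̃_{s,t} / ((t−s) m_{s,t}) ) · sqrt( a ⟨Σ_{s,t}(a)^{-1} w, w⟩ ), for all w ∈ ℝ². -/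
/-!
With `τ = t - s`, `B = ∫ (A - A s)`, `C = ∫ (A - A s)²` and `D = τ C - B²`, the matrix is
`a • !![τ, -B; -B, C]`, whose inverse is `(a D)⁻¹ • !![C, B; B, τ]`. Hence
`a (Σ⁻¹ w)₀ = (C w₀ + B w₁) / D` and `a ⟪Σ⁻¹ w, w⟫ = Q / D` with `Q = C w₀² + 2 B w₀ w₁ + τ w₁²`,
and the bound is Cauchy–Schwarz for this form: `C Q - (C w₀ + B w₁)² = D w₁² ≥ 0`.
Expanding the square around `A s` shows `∫ (A - mean)² = C - B² / τ`, so the constant in front is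
exactly `√(C / D)`, and the positivity of the variance is `D > 0`.
-/

open MeasureTheory intervalIntegral Matrix

theorem integral_sub_average_sq_eq {f : ℝ → ℝ} {s t : ℝ} (hst : s ≠ t)
    (hf : ContinuousOn f (Set.uIcc s t)) (c : ℝ) :
    ∫ r in s..t, (f r - (t - s)⁻¹ * ∫ u in s..t, f u) ^ 2
      = (∫ r in s..t, (f r - c) ^ 2) - (∫ r in s..t, (f r - c)) ^ 2 / (t - s) := by
  have hτ : t - s ≠ 0 := sub_ne_zero.mpr hst.symm
  have hg : IntervalIntegrable (fun r => f r - c) volume s t :=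
    (hf.sub continuousOn_const).intervalIntegrable
  have hg2 : IntervalIntegrable (fun r => (f r - c) ^ 2) volume s t :=
    ((hf.sub continuousOn_const).pow 2).intervalIntegrable
  set B := ∫ r in s..t, (f r - c)
  have hmean : (t - s)⁻¹ * ∫ u in s..t, f u = c + B / (t - s) := by
    have hint : ∫ u in s..t, f u = B + (t - s) * c := by
      rw [show B = ∫ r in s..t, (f r - c) from rfl,
        integral_sub hf.intervalIntegrable intervalIntegrable_const,
        intervalIntegral.integral_const, smul_eq_mul]
      ring
    rw [hint]; field_simp; ring
  have hexpand : ∀ r, (f r - (t - s)⁻¹ * ∫ u in s..t, f u) ^ 2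
      = (f r - c) ^ 2 - 2 * (B / (t - s)) * (f r - c) + (B / (t - s)) ^ 2 := by
    intro r; rw [hmean]; ring
  simp only [hexpand]
  rw [integral_add (hg2.sub (hg.const_mul _)) intervalIntegrable_const,
    integral_sub hg2 (hg.const_mul _), intervalIntegral.integral_const_mul,
    intervalIntegral.integral_const, smul_eq_mul]
  field_simp
  ring

theorem inv_smul_symm_fin_two (a τ B C : ℝ) (h : a * (τ * C - B ^ 2) ≠ 0) :
    (a • !![τ, -B; -B, C])⁻¹ = (a * (τ * C - B ^ 2))⁻¹ • !![C, B; B, τ] := by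
  have hadj : !![τ, -B; -B, C] * !![C, B; B, τ]
      = (τ * C - B ^ 2) • (1 : Matrix (Fin 2) (Fin 2) ℝ) := by
    ext i j
    fin_cases i <;> fin_cases j <;> simp [Matrix.mul_apply, Fin.sum_univ_two] <;> ring
  refine inv_eq_right_inv ?_
  rw [smul_mul_smul_comm, hadj, smul_smul]
  convert one_smul ℝ (1 : Matrix (Fin 2) (Fin 2) ℝ)
  rw [mul_assoc, ← div_eq_inv_mul, ← mul_div_assoc, div_self h]

theorem sq_le_mul_quadForm_of_det_nonneg {τ B C : ℝ} (hD : 0 ≤ τ * C - B ^ 2) (x y : ℝ) :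
    (C * x + B * y) ^ 2 ≤ C * (C * x ^ 2 + 2 * B * x * y + τ * y ^ 2) := by
  nlinarith [mul_nonneg hD (sq_nonneg y)]

theorem mul_abs_inv_mulVec_zero_le {a τ B C : ℝ} (ha : 0 < a) (hC : 0 ≤ C)
    (hD : 0 < τ * C - B ^ 2) (w : Fin 2 → ℝ) :
    a * |((a • !![τ, -B; -B, C])⁻¹ *ᵥ w) 0|
      ≤ √(C / (τ * C - B ^ 2)) * √(a * ((a • !![τ, -B; -B, C])⁻¹ *ᵥ w ⬝ᵥ w)) := by
  have haD : a * (τ * C - B ^ 2) ≠ 0 := (mul_pos ha hD).ne'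
  have hfst : a * ((((a * (τ * C - B ^ 2))⁻¹ • !![C, B; B, τ]) *ᵥ w) 0)
      = (C * w 0 + B * w 1) / (τ * C - B ^ 2) := by
    simp only [smul_of, smul_cons, smul_eq_mul, smul_empty, cons_mulVec, empty_mulVec, dotProduct,
      Fin.sum_univ_two, cons_val_zero, cons_val_one, cons_val_fin_one]
    field_simp
  have hform : a * (((a * (τ * C - B ^ 2))⁻¹ • !![C, B; B, τ]) *ᵥ w ⬝ᵥ w)
      = (C * w 0 ^ 2 + 2 * B * w 0 * w 1 + τ * w 1 ^ 2) / (τ * C - B ^ 2) := by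
    simp only [smul_of, smul_cons, smul_eq_mul, smul_empty, cons_mulVec, empty_mulVec, dotProduct,
      Fin.sum_univ_two, cons_val_zero, cons_val_one, cons_val_fin_one]
    field_simp
    ring
  rw [inv_smul_symm_fin_two a τ B C haD, ← Real.sqrt_mul (div_nonneg hC hD.le),
    ← abs_of_pos ha, ← abs_mul, abs_of_pos ha, hfst, hform]
  apply Real.abs_le_sqrt
  rw [div_pow, div_mul_div_comm, ← sq]
  exact div_le_div_of_nonneg_right (sq_le_mul_quadForm_of_det_nonneg hD.le _ _) (by positivity)

/-- Bound on the first component of `Σ_{s,t}(a)⁻¹ w`. -/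
theorem stmt10 (T a : ℝ) (ha : 0 < a) (A : ℝ → ℝ) (hA : ContinuousOn A (Set.Icc 0 T))
    (s t : ℝ) (hs : 0 ≤ s) (hst : s < t) (htT : t ≤ T)
    (hm : 0 < (t - s)⁻¹ * ∫ r in s..t, (A r - (t - s)⁻¹ * ∫ u in s..t, A u) ^ 2)
    (w : Fin 2 → ℝ) :
    a * |((a • !![t - s, -(∫ r in s..t, (A r - A s));
                  -(∫ r in s..t, (A r - A s)), ∫ r in s..t, (A r - A s) ^ 2])⁻¹.mulVec w) 0|
      ≤ Real.sqrt (((t - s)⁻¹ * ∫ r in s..t, (A r - A s) ^ 2)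
            / ((t - s)
                * ((t - s)⁻¹ * ∫ r in s..t, (A r - (t - s)⁻¹ * ∫ u in s..t, A u) ^ 2)))
        * Real.sqrt (a *
            ((a • !![t - s, -(∫ r in s..t, (A r - A s));
                     -(∫ r in s..t, (A r - A s)),
                     ∫ r in s..t, (A r - A s) ^ 2])⁻¹.mulVec w ⬝ᵥ w)) := by
  have hτ : 0 < t - s := sub_pos.mpr hst
  have hcont : ContinuousOn A (Set.uIcc s t) :=
    hA.mono (Set.uIcc_of_le hst.le ▸ Set.Icc_subset_Icc hs htT)
  rw [integral_sub_average_sq_eq hst.ne hcont (A s)] at hm ⊢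
  set B := ∫ r in s..t, (A r - A s)
  set C := ∫ r in s..t, (A r - A s) ^ 2
  have hC : 0 ≤ C := integral_nonneg hst.le fun _ _ => sq_nonneg _
  have hD : 0 < (t - s) * C - B ^ 2 := by
    have hdet : (t - s) * C - B ^ 2 = (t - s) ^ 2 * ((t - s)⁻¹ * (C - B ^ 2 / (t - s))) := by
      field_simp
    rw [hdet]
    positivity
  have hratio : (t - s)⁻¹ * C / ((t - s) * ((t - s)⁻¹ * (C - B ^ 2 / (t - s))))
      = C / ((t - s) * C - B ^ 2) := by
    field_simp
  rw [hratio]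
  exact mul_abs_inv_mulVec_zero_le ha hC hD w
end

section
/- In the setting of the previous context, the second component satisfies a |(Σ_{s,t}(a)^{-1} w)₂| ≤ (1/sqrt((t−s) m_{s,t})) · sqrt( a ⟨Σ_{s,t}(a)^{-1} w, w⟩ ), for all w ∈ ℝ². -/
open MeasureTheory intervalIntegral Matrix

/-!
Write `p = t - s`, `b = ∫ (A - A s)`, `c = ∫ (A - A s)²`. Then `Σ = a • !![p, -b; -b, c]` has
inverse `(a δ)⁻¹ • !![c, b; b, p]` with `δ = p c - b²`, and `δ = p² m_{s,t}` because the Gram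
determinant `p ∫ (f - κ)² - (∫ (f - κ))²` does not depend on the shift `κ`. With
`X = b w₀ + p w₁` and `Q = c w₀² + 2 b w₀ w₁ + p w₁²`, the claim reduces to the
Cauchy–Schwarz inequality `X² ≤ p Q`, which holds since `p Q - X² = δ w₀²`.
-/

section GramDeterminant

variable {f : ℝ → ℝ} {s t : ℝ}

theorem intervalIntegral.integral_sub_const_sq (hf : IntervalIntegrable f volume s t)
    (hf2 : IntervalIntegrable (fun r => f r ^ 2) volume s t) (κ : ℝ) :
    ∫ r in s..t, (f r - κ) ^ 2
      = (∫ r in s..t, f r ^ 2) - 2 * κ * (∫ r in s..t, f r) + κ ^ 2 * (t - s) := by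
  have hexpand : ∀ r, (f r - κ) ^ 2 = f r ^ 2 - 2 * κ * f r + κ ^ 2 := fun r => by ring
  simp_rw [hexpand]
  rw [integral_add (hf2.sub (hf.const_mul _)) intervalIntegrable_const,
    integral_sub hf2 (hf.const_mul _), integral_const_mul, integral_const, smul_eq_mul]
  ring

theorem intervalIntegral.gram_sub_const (hf : IntervalIntegrable f volume s t)
    (hf2 : IntervalIntegrable (fun r => f r ^ 2) volume s t) (κ : ℝ) :
    (t - s) * (∫ r in s..t, (f r - κ) ^ 2) - (∫ r in s..t, (f r - κ)) ^ 2
      = (t - s) * (∫ r in s..t, f r ^ 2) - (∫ r in s..t, f r) ^ 2 := by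
  rw [integral_sub_const_sq hf hf2, integral_sub hf intervalIntegrable_const, integral_const,
    smul_eq_mul]
  ring

theorem intervalIntegral.gram_sub_const_eq_variance (hst : s ≠ t)
    (hf : IntervalIntegrable f volume s t)
    (hf2 : IntervalIntegrable (fun r => f r ^ 2) volume s t) (κ : ℝ) :
    (t - s) * (∫ r in s..t, (f r - κ) ^ 2) - (∫ r in s..t, (f r - κ)) ^ 2
      = (t - s) ^ 2
        * ((t - s)⁻¹ * ∫ r in s..t, (f r - (t - s)⁻¹ * ∫ u in s..t, f u) ^ 2) := by
  have hp : t - s ≠ 0 := sub_ne_zero.mpr hst.symm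
  have hmean : ∫ r in s..t, (f r - (t - s)⁻¹ * ∫ u in s..t, f u) = 0 := by
    rw [integral_sub hf intervalIntegrable_const, integral_const, smul_eq_mul]
    field_simp
    ring
  calc (t - s) * (∫ r in s..t, (f r - κ) ^ 2) - (∫ r in s..t, (f r - κ)) ^ 2
      = (t - s) * (∫ r in s..t, (f r - (t - s)⁻¹ * ∫ u in s..t, f u) ^ 2)
          - (∫ r in s..t, (f r - (t - s)⁻¹ * ∫ u in s..t, f u)) ^ 2 := by
        rw [gram_sub_const hf hf2, gram_sub_const hf hf2]
    _ = _ := by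
        rw [hmean]
        field_simp
        ring

end GramDeterminant

section TwoByTwo

theorem Matrix.inv_smul_of_fin_two_symm {a p b c : ℝ} (ha : a ≠ 0) (hδ : p * c - b ^ 2 ≠ 0) :
    (a • !![p, -b; -b, c])⁻¹ = (a * (p * c - b ^ 2))⁻¹ • !![c, b; b, p] := by
  apply inv_eq_right_inv
  ext i j
  fin_cases i <;> fin_cases j <;>
    · simp [mul_apply, Fin.sum_univ_two]
      field_simp
      ring

theorem Matrix.abs_inv_mulVec_one_le {a p b c : ℝ} (ha : 0 < a) (hp : 0 < p)
    (hδ : 0 < p * c - b ^ 2) (w : Fin 2 → ℝ) :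
    a * |((a • !![p, -b; -b, c])⁻¹ *ᵥ w) 1|
      ≤ 1 / √((p * c - b ^ 2) / p) * √(a * ((a • !![p, -b; -b, c])⁻¹ *ᵥ w ⬝ᵥ w)) := by
  set δ := p * c - b ^ 2
  set M := a • !![p, -b; -b, c]
  set X := b * w 0 + p * w 1
  set Q := c * w 0 ^ 2 + 2 * b * w 0 * w 1 + p * w 1 ^ 2
  have hMinv : M⁻¹ = (a * δ)⁻¹ • !![c, b; b, p] := inv_smul_of_fin_two_symm ha.ne' hδ.ne'
  have hMinv_mulVec : M⁻¹ *ᵥ w = (a * δ)⁻¹ • ![c * w 0 + b * w 1, X] := by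
    ext i
    fin_cases i <;> simp [hMinv, mulVec, vec2_dotProduct, X] <;> ring
  have hcomponent : a * (M⁻¹ *ᵥ w) 1 = X / δ := by
    rw [hMinv_mulVec, Pi.smul_apply, cons_val_one, cons_val_fin_one, smul_eq_mul]
    field_simp
  have hform : a * (M⁻¹ *ᵥ w ⬝ᵥ w) = Q / δ := by
    rw [hMinv_mulVec, smul_dotProduct, vec2_dotProduct, cons_val_zero, cons_val_one,
      cons_val_fin_one, smul_eq_mul]
    field_simp
    ring
  have hcauchySchwarz : X ^ 2 ≤ p * Q := by
    have hgap : p * Q - X ^ 2 = δ * w 0 ^ 2 := by ring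
    linarith [mul_nonneg hδ.le (sq_nonneg (w 0))]
  calc a * |(M⁻¹ *ᵥ w) 1| = |X / δ| := by rw [← hcomponent, abs_mul, abs_of_pos ha]
    _ ≤ √(p / δ * (Q / δ)) :=
      Real.abs_le_sqrt (by rw [div_pow, div_mul_div_comm, ← sq]; gcongr)
    _ = 1 / √(δ / p) * √(a * (M⁻¹ *ᵥ w ⬝ᵥ w)) := by
      rw [hform, Real.sqrt_mul (div_nonneg hp.le hδ.le), one_div, ← Real.sqrt_inv, inv_div]

end TwoByTwo

/-- Bound on the second component of `Σ_{s,t}(a)⁻¹ w`. -/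
theorem stmt11 (T a : ℝ) (ha : 0 < a) (A : ℝ → ℝ) (hA : ContinuousOn A (Set.Icc 0 T))
    (s t : ℝ) (hs : 0 ≤ s) (hst : s < t) (htT : t ≤ T)
    (hm : 0 < (t - s)⁻¹ * ∫ r in s..t, (A r - (t - s)⁻¹ * ∫ u in s..t, A u) ^ 2)
    (w : Fin 2 → ℝ) :
    a * |((a • !![t - s, -(∫ r in s..t, (A r - A s));
                  -(∫ r in s..t, (A r - A s)), ∫ r in s..t, (A r - A s) ^ 2])⁻¹.mulVec w) 1|
      ≤ (1 / Real.sqrt ((t - s)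
            * ((t - s)⁻¹ * ∫ r in s..t, (A r - (t - s)⁻¹ * ∫ u in s..t, A u) ^ 2)))
        * Real.sqrt (a *
            ((a • !![t - s, -(∫ r in s..t, (A r - A s));
                     -(∫ r in s..t, (A r - A s)),
                     ∫ r in s..t, (A r - A s) ^ 2])⁻¹.mulVec w ⬝ᵥ w)) := by
  have hp : 0 < t - s := sub_pos.mpr hst
  have hAc : ContinuousOn A (Set.uIcc s t) :=
    hA.mono (by rw [Set.uIcc_of_le hst.le]; exact Set.Icc_subset_Icc hs htT)
  have hδ := gram_sub_const_eq_variance hst.ne hAc.intervalIntegrable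
    (hAc.pow 2).intervalIntegrable (A s)
  have hpm : (t - s) * ((t - s)⁻¹ * ∫ r in s..t, (A r - (t - s)⁻¹ * ∫ u in s..t, A u) ^ 2)
      = ((t - s) * (∫ r in s..t, (A r - A s) ^ 2) - (∫ r in s..t, (A r - A s)) ^ 2)
          / (t - s) := by
    rw [hδ]
    field_simp
  rw [hpm]
  exact abs_inv_mulVec_one_le ha hp (by rw [hδ]; exact mul_pos (pow_pos hp 2) hm) w
end
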